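/- Let 𝒜 be a unital C*-algebra and A, B, C, D, E, F, G, H ∈ 𝒜 partial isometries (x x* x = x for each of them) such that the 4×4 matrix M = [[AA*, BB*, CC*, DD*], [EE*, FF*, GG*, HH*], [B*B, A*A, D*D, C*C], [F*F, E*E, H*H, G*G]] has every row and every column summing to 1. Then the 4×4 matrix U = [[A, B, C, D], [B*, A*, D*, C*], [E, F, G, H], [F*, E*, H*, G*]] is unitary (U U* = U* U = 1), and moreover x y* = 0 and x* y = 0 for every pair of distinct elements x ≠ y from {A, B, C, D}, and likewise for every pair of distinct elements from {E, F, G, H}. -/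

import Mathlib

/-!
Projections summing to `1` in a C*-algebra are pairwise orthogonal: compressing the sum by `p j`
leaves `∑_{k ≠ j} (p k * p j)⋆ * (p k * p j) = 0`, a sum of positive elements. For partial
isometries, `x y⋆ = x (x⋆x)(y⋆y) y⋆` and `x⋆ y = x⋆ (x x⋆)(y y⋆) y`, so orthogonal source (range)
projections force `x y⋆ = 0` (`x⋆ y = 0`). Hence a square matrix of partial isometries whose
range projections sum to `1` along every row and whose source projections sum to `1` along every
column is unitary, and the rows and columns of `M` are exactly these sums for `U`.
-/

/-- The fundamental `4 × 4` matrix `U = [[A,B,C,D],[B*,A*,D*,C*],[E,F,G,H],[F*,E*,H*,G*]]`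
appearing in the computation of `QISO⁺(𝔽₂, S)`. -/
def fundamentalMatrix {𝒜 : Type*} [Ring 𝒜] [StarRing 𝒜] (A B C D E F G H : 𝒜) :
    Matrix (Fin 4) (Fin 4) 𝒜 :=
  !![A, B, C, D;
     star B, star A, star D, star C;
     E, F, G, H;
     star F, star E, star H, star G]

/-- The `4 × 4` matrix `M` of range and initial projections
`[[AA*,BB*,CC*,DD*],[EE*,FF*,GG*,HH*],[B*B,A*A,D*D,C*C],[F*F,E*E,H*H,G*G]]`. -/
def projectionMatrix {𝒜 : Type*} [Ring 𝒜] [StarRing 𝒜] (A B C D E F G H : 𝒜) :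
    Matrix (Fin 4) (Fin 4) 𝒜 :=
  !![A * star A, B * star B, C * star C, D * star D;
     E * star E, F * star F, G * star G, H * star H;
     star B * B, star A * A, star D * D, star C * C;
     star F * F, star E * E, star H * H, star G * G]

theorem IsStarProjection.mul_eq_zero_of_sum_eq_one {R ι : Type*} [NormedRing R] [StarRing R]
    [CStarRing R] [PartialOrder R] [StarOrderedRing R] [Fintype ι] {p : ι → R}
    (hp : ∀ i, IsStarProjection (p i)) (hsum : ∑ i, p i = 1) {i j : ι} (hij : i ≠ j) :
    p i * p j = 0 := by
  classical
  have hconj : ∀ k, p j * p k * p j = star (p k * p j) * (p k * p j) := fun k => by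
    rw [star_mul, (hp j).isSelfAdjoint.star_eq, (hp k).isSelfAdjoint.star_eq, ← mul_assoc,
      mul_assoc (p j) (p k) (p k), (hp k).isIdempotentElem.eq]
  have hjj : p j * p j * p j = p j := by rw [(hp j).isIdempotentElem.eq, (hp j).isIdempotentElem.eq]
  have hrest : ∑ k ∈ Finset.univ.erase j, p j * p k * p j = 0 := by
    have htotal : ∑ k, p j * p k * p j = p j := by
      rw [← Finset.sum_mul, ← Finset.mul_sum, hsum, mul_one, (hp j).isIdempotentElem.eq]
    rwa [← Finset.add_sum_erase _ _ (Finset.mem_univ j), hjj, add_eq_left] at htotal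
  have hnonneg : ∀ k ∈ Finset.univ.erase j, 0 ≤ p j * p k * p j := fun k _ =>
    hconj k ▸ star_mul_self_nonneg _
  have hi := (Finset.sum_eq_zero_iff_of_nonneg hnonneg).mp hrest i (by simpa using hij)
  rwa [hconj, CStarRing.star_mul_self_eq_zero_iff] at hi

def IsPartialIsometry {R : Type*} [Mul R] [Star R] (x : R) : Prop :=
  x * star x * x = x

namespace IsPartialIsometry

variable {R : Type*} [Semiring R] [StarRing R] {x y : R}

protected theorem star (hx : IsPartialIsometry x) : IsPartialIsometry (star x) := by
  simpa [IsPartialIsometry, mul_assoc] using congrArg star hx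

theorem isStarProjection_mul_star (hx : IsPartialIsometry x) : IsStarProjection (x * star x) :=
  ⟨by rw [IsIdempotentElem, ← mul_assoc, hx], .mul_star_self x⟩

theorem isStarProjection_star_mul (hx : IsPartialIsometry x) : IsStarProjection (star x * x) := by
  simpa using hx.star.isStarProjection_mul_star

theorem mul_star_eq_zero (hx : IsPartialIsometry x) (hy : IsPartialIsometry y)
    (h : star x * x * (star y * y) = 0) : x * star y = 0 :=
  calc x * star y = (x * star x * x) * star (y * star y * y) := by rw [hx, hy]
    _ = x * (star x * x * (star y * y)) * star y := by simp only [star_mul, star_star, mul_assoc]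
    _ = 0 := by rw [h, mul_zero, zero_mul]

theorem star_mul_eq_zero (hx : IsPartialIsometry x) (hy : IsPartialIsometry y)
    (h : x * star x * (y * star y) = 0) : star x * y = 0 := by
  simpa using hx.star.mul_star_eq_zero hy.star (by simpa using h)

end IsPartialIsometry

namespace Matrix

variable {R n : Type*} [NormedRing R] [StarRing R] [CStarRing R] [PartialOrder R]
  [StarOrderedRing R] [Fintype n] {U : Matrix n n R}

theorem star_apply_mul_apply_eq_zero (hU : ∀ i j, IsPartialIsometry (U i j))
    (hrow : ∀ i, ∑ j, U i j * star (U i j) = 1) (i : n) {k l : n} (hkl : k ≠ l) :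
    star (U i k) * U i l = 0 :=
  (hU i k).star_mul_eq_zero (hU i l) <| IsStarProjection.mul_eq_zero_of_sum_eq_one
    (fun j => (hU i j).isStarProjection_mul_star) (hrow i) hkl

theorem apply_mul_star_apply_eq_zero (hU : ∀ i j, IsPartialIsometry (U i j))
    (hcol : ∀ j, ∑ i, star (U i j) * U i j = 1) (k : n) {i j : n} (hij : i ≠ j) :
    U i k * star (U j k) = 0 :=
  (hU i k).mul_star_eq_zero (hU j k) <| IsStarProjection.mul_eq_zero_of_sum_eq_one
    (fun i => (hU i k).isStarProjection_star_mul) (hcol k) hij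

theorem mem_unitary_of_isPartialIsometry [DecidableEq n] (hU : ∀ i j, IsPartialIsometry (U i j))
    (hrow : ∀ i, ∑ j, U i j * star (U i j) = 1) (hcol : ∀ j, ∑ i, star (U i j) * U i j = 1) :
    U ∈ unitary (Matrix n n R) := by
  refine Unitary.mem_iff.mpr ⟨?_, ?_⟩ <;> ext i j <;>
    simp only [mul_apply, star_apply, one_apply]
  · split_ifs with hij
    · exact hij ▸ hcol i
    · exact Finset.sum_eq_zero fun k _ => star_apply_mul_apply_eq_zero hU hrow k hij
  · split_ifs with hij
    · exact hij ▸ hrow i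
    · exact Finset.sum_eq_zero fun k _ => apply_mul_star_apply_eq_zero hU hcol k hij

end Matrix

/-- Let `𝒜` be a unital C*-algebra and `A, …, H ∈ 𝒜` partial
isometries such that every row and every column of
`M = [[AA*,BB*,CC*,DD*],[EE*,FF*,GG*,HH*],[B*B,A*A,D*D,C*C],[F*F,E*E,H*H,G*G]]`
sums to `1`. Then `U = [[A,B,C,D],[B*,A*,D*,C*],[E,F,G,H],[F*,E*,H*,G*]]` is unitary,
and `xy* = 0`, `x*y = 0` for every pair of distinct elements among `{A,B,C,D}` and
likewise among `{E,F,G,H}`. (Converse direction in the proof of Theorem 5.1.) -/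
theorem qiso_free_group_magic_unitary_converse
    {𝒜 : Type*} [NormedRing 𝒜] [StarRing 𝒜] [CStarRing 𝒜] [CompleteSpace 𝒜]
    [NormedAlgebra ℂ 𝒜] [StarModule ℂ 𝒜]
    (A B C D E F G H : 𝒜)
    (hpA : A * star A * A = A) (hpB : B * star B * B = B)
    (hpC : C * star C * C = C) (hpD : D * star D * D = D)
    (hpE : E * star E * E = E) (hpF : F * star F * F = F)
    (hpG : G * star G * G = G) (hpH : H * star H * H = H)
    (hrows : ∀ i : Fin 4, ∑ j : Fin 4, projectionMatrix A B C D E F G H i j = 1)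
    (hcols : ∀ j : Fin 4, ∑ i : Fin 4, projectionMatrix A B C D E F G H i j = 1) :
    (fundamentalMatrix A B C D E F G H * star (fundamentalMatrix A B C D E F G H) = 1 ∧
     star (fundamentalMatrix A B C D E F G H) * fundamentalMatrix A B C D E F G H = 1) ∧
    (∀ i j : Fin 4, i ≠ j →
      (![A, B, C, D] i) * star (![A, B, C, D] j) = 0 ∧
      star (![A, B, C, D] i) * (![A, B, C, D] j) = 0) ∧
    (∀ i j : Fin 4, i ≠ j →
      (![E, F, G, H] i) * star (![E, F, G, H] j) = 0 ∧
      star (![E, F, G, H] i) * (![E, F, G, H] j) = 0) := by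
  let _ : CStarAlgebra 𝒜 := {}
  let _ := CStarAlgebra.spectralOrder 𝒜
  have := CStarAlgebra.spectralOrderedRing 𝒜
  set U := fundamentalMatrix A B C D E F G H
  have hU : ∀ i j, IsPartialIsometry (U i j) := by
    intro i j
    fin_cases i <;> fin_cases j <;> first | assumption | exact IsPartialIsometry.star ‹_›
  have hrow : ∀ i, ∑ j, U i j * star (U i j) = 1 := by
    intro i
    fin_cases i <;> [rw [← hrows 0]; rw [← hrows 2]; rw [← hrows 1]; rw [← hrows 3]] <;>
      simp [U, fundamentalMatrix, projectionMatrix, Fin.sum_univ_four]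
  have hcol : ∀ j, ∑ i, star (U i j) * U i j = 1 := by
    intro j
    fin_cases j <;> [rw [← hcols 1]; rw [← hcols 0]; rw [← hcols 3]; rw [← hcols 2]] <;>
      simp [U, fundamentalMatrix, projectionMatrix, Fin.sum_univ_four] <;> abel
  have hUnitary := Unitary.mem_iff.mp (Matrix.mem_unitary_of_isPartialIsometry hU hrow hcol)
  have hrowOrth := Matrix.star_apply_mul_apply_eq_zero hU hrow
  let σ : Fin 4 → Fin 4 := ![1, 0, 3, 2]
  have hσ : σ.Injective := by decide
  have hpair : ∀ r r' : Fin 4, (∀ k, U r' (σ k) = star (U r k)) → ∀ i j, i ≠ j →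
      U r i * star (U r j) = 0 ∧ star (U r i) * U r j = 0 := by
    intro r r' h i j hij
    refine ⟨?_, hrowOrth r hij⟩
    -- `x y⋆ = (x⋆)⋆ y⋆` is a product of two distinct entries of row `r'`
    simpa [h] using hrowOrth r' (hσ.ne hij)
  refine ⟨⟨hUnitary.2, hUnitary.1⟩, hpair 0 1 ?_, hpair 2 3 ?_⟩ <;>
    intro k <;> fin_cases k <;> rfl
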